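/- arXiv:1311.6991 — 3 statements merged into one kernel-verified Lean document; each statement's English description precedes it below -/
import Mathlib

section
/- Let J_i = Σ_{j<i} (j i) denote the i-th Jucys–Murphy element in the group algebra ℂS_n. Then the product T(x) = ∏_{i=1}^{n} (x + J_i) equals Σ_{σ ∈ S_n} x^{l(σ)} σ, where l(σ) is the number of cycles of σ. -/
open Polynomial

/-- The number of cycles of a permutation of `Fin n`, counting fixed points. -/
def numCycles {n : ℕ} (σ : Equiv.Perm (Fin n)) : ℕ :=
  Multiset.card σ.cycleType + (n - σ.cycleType.sum)

/-- The `i`-th Jucys–Murphy element `J_i = Σ_{j<i} (j i)` in `ℂ S_n`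
(0-based: `J_{i+1}` is `jucysMurphy n i`, and `jucysMurphy n 0 = 0`). -/
noncomputable def jucysMurphy (n : ℕ) (i : Fin n) :
    MonoidAlgebra ℂ (Equiv.Perm (Fin n)) :=
  ∑ j ∈ Finset.univ.filter (fun j : Fin n => j < i),
    MonoidAlgebra.of ℂ (Equiv.Perm (Fin n)) (Equiv.swap j i)

/-!
Induction on `n`. Every permutation of `Fin (n + 1)` factors uniquely as `σ' * (p n)` with
`σ'` a permutation fixing `n` and `p ≤ n`. For `p = n` the factor is `1` and `n` is a new fixed
point, so the number of cycles goes up by one; for `p < n` right multiplication by `(p n)` inserts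
`n` into the cycle of `p`, so it is unchanged. Hence
`Σ_{τ ∈ S_{n+1}} x^{l(τ)} τ = (Σ_{σ ∈ S_n} x^{l(σ)} σ) (x + J_{n+1})`,
which is also the recursion satisfied by the product.
-/

open Finset

namespace Equiv.Perm

section

variable {α : Type*} [Fintype α] [DecidableEq α]

theorem IsCycle.card_cycleType_swap_mul_add_card_support {c : Perm α} (hc : c.IsCycle) {x : α}
    (hx : c x ≠ x) :
    Multiset.card (swap x (c x) * c).cycleType + #c.support =
      #(swap x (c x) * c).support + 2 := by
  by_cases hcc : c (c x) = x
  · have hswap : c = swap x (c x) := hc.eq_swap_of_apply_apply_eq_self hx hcc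
    have hone : swap x (c x) * c = 1 := by
      nth_rewrite 2 [hswap]
      exact swap_mul_self x (c x)
    rw [hone, cycleType_one, support_one, hswap, card_support_swap hx.symm]
    rfl
  · rw [(hc.swap_mul hx hcc).cycleType, support_swap_mul_eq c x hcc, Multiset.card_singleton,
      card_sdiff_of_subset (by simpa using mem_support.mpr hx), card_singleton]
    have := hc.two_le_card_support
    omega

/-- `swap x (f x) * f` splits `x` off its cycle as a fixed point. -/
theorem card_cycleType_swap_mul_add_card_support {f : Perm α} {x : α} (hx : f x ≠ x) :
    Multiset.card (swap x (f x) * f).cycleType + #f.support =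
      Multiset.card f.cycleType + #(swap x (f x) * f).support + 1 := by
  set c := f.cycleOf x
  have hc : c.IsCycle := f.isCycle_cycleOf hx
  have hρc : Disjoint (f * c⁻¹) c := disjoint_mul_inv_of_mem_cycleFactorsFinset
    (cycleOf_mem_cycleFactorsFinset_iff.mpr (mem_support.mpr hx))
  set ρ := f * c⁻¹
  have hf : f = c * ρ := by rw [← hρc.commute.eq, inv_mul_cancel_right]
  have hcx : f x = c x := (f.cycleOf_apply_self x).symm
  have hdρ : Disjoint (swap x (c x) * c) ρ := hρc.symm.mono
    (fun y hy => (mem_support_swap_mul_imp_mem_support_ne hy).1) le_rfl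
  have hg : swap x (f x) * f = swap x (c x) * c * ρ := by
    rw [hcx, mul_assoc, ← hf]
  rw [hg, hdρ.cycleType_mul, hdρ.card_support_mul, hf, hρc.symm.cycleType_mul,
    hρc.symm.card_support_mul, Multiset.card_add, Multiset.card_add, hc.cycleType,
    Multiset.card_singleton]
  have := hc.card_cycleType_swap_mul_add_card_support (hcx ▸ hx)
  omega

end

variable {n : ℕ}

theorem numCycles_conj (σ τ : Perm (Fin n)) : numCycles (τ * σ * τ⁻¹) = numCycles σ := by
  rw [numCycles, numCycles, cycleType_conj]

theorem numCycles_swap_mul {σ : Perm (Fin n)} {x : Fin n} (hx : σ x ≠ x) :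
    numCycles (swap x (σ x) * σ) = numCycles σ + 1 := by
  have key := card_cycleType_swap_mul_add_card_support hx
  have hσ := card_le_univ σ.support
  have hτ := card_le_univ (swap x (σ x) * σ).support
  simp only [numCycles, sum_cycleType, Fintype.card_fin] at hσ hτ ⊢
  omega

variable (n) in
def castSuccHom : Perm (Fin n) →* Perm (Fin (n + 1)) :=
  extendDomainHom (finSuccAboveEquiv (Fin.last n))

@[simp]
theorem castSuccHom_apply_castSucc (σ : Perm (Fin n)) (i : Fin n) :
    castSuccHom n σ i.castSucc = (σ i).castSucc := by
  simpa [castSuccHom, finSuccAboveEquiv_apply] using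
    σ.extendDomain_apply_image (finSuccAboveEquiv (Fin.last n)) i

@[simp]
theorem castSuccHom_apply_last (σ : Perm (Fin n)) : castSuccHom n σ (Fin.last n) = Fin.last n :=
  σ.extendDomain_apply_not_subtype _ (by simp)

theorem castSuccHom_swap (i j : Fin n) :
    castSuccHom n (swap i j) = swap i.castSucc j.castSucc := by
  ext x
  induction x using Fin.lastCases with
  | last =>
    simp [swap_apply_of_ne_of_ne (Fin.castSucc_lt_last i).ne' (Fin.castSucc_lt_last j).ne']
  | cast k => simp [swap_apply_def, apply_ite Fin.castSucc]

theorem numCycles_castSuccHom (σ : Perm (Fin n)) :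
    numCycles (castSuccHom n σ) = numCycles σ + 1 := by
  have h := σ.sum_cycleType_le
  simp only [numCycles, castSuccHom, extendDomainHom_apply, cycleType_extendDomain,
    Fintype.card_fin] at h ⊢
  omega

/-- Left multiplication by `(i n)` splits `n` off again and gives a conjugate of
`castSuccHom n σ`. -/
theorem numCycles_castSuccHom_mul_swap (σ : Perm (Fin n)) (i : Fin n) :
    numCycles (castSuccHom n σ * swap i.castSucc (Fin.last n)) = numCycles σ := by
  set τ := castSuccHom n σ * swap i.castSucc (Fin.last n)
  have hτi : τ i.castSucc = Fin.last n := by simp [τ]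
  have hconj : swap i.castSucc (τ i.castSucc) * τ =
      swap i.castSucc (Fin.last n) * castSuccHom n σ * (swap i.castSucc (Fin.last n))⁻¹ := by
    rw [hτi, swap_inv, mul_assoc]
  have h := numCycles_swap_mul (hτi.trans_ne (Fin.castSucc_lt_last i).ne')
  rw [hconj, numCycles_conj, numCycles_castSuccHom] at h
  omega

theorem castSuccHom_mul_swap_bijective :
    Function.Bijective fun σp : Perm (Fin n) × Fin (n + 1) =>
      castSuccHom n σp.1 * swap σp.2 (Fin.last n) := by
  rw [Fintype.bijective_iff_injective_and_card]
  refine ⟨fun ⟨σ, p⟩ ⟨σ', p'⟩ h => ?_, ?_⟩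
  · have hinv (σ : Perm (Fin n)) (p : Fin (n + 1)) :
        (castSuccHom n σ * swap p (Fin.last n))⁻¹ (Fin.last n) = p := by
      rw [mul_inv_rev, ← map_inv, mul_apply, castSuccHom_apply_last, swap_inv, swap_apply_right]
    have hp : p = p' := by
      simpa only [hinv] using congr_arg (fun τ => τ⁻¹ (Fin.last n)) h
    subst hp
    simpa using extendDomainHom_injective _ (mul_right_cancel h)
  · simp [Fintype.card_perm, Nat.factorial_succ, mul_comm]

end Equiv.Perm

theorem MonoidAlgebra.mapDomainRingHom_of {R M N : Type*} [Semiring R] [Monoid M] [Monoid N]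
    (f : M →* N) (m : M) : mapDomainRingHom R f (of R M m) = of R N (f m) := by
  simp [of_apply, mapDomain_single]

open Equiv Equiv.Perm MonoidAlgebra

theorem jucysMurphy_castSucc {n : ℕ} (i : Fin n) :
    jucysMurphy (n + 1) i.castSucc = mapDomainRingHom ℂ (castSuccHom n) (jucysMurphy n i) := by
  have hlt : univ.filter (· < i.castSucc) = (univ.filter (· < i)).map Fin.castSuccEmb := by
    ext j
    induction j using Fin.lastCases with
    | last => simp [(Fin.castSucc_lt_last i).not_gt]
    | cast j => simp
  simp [jucysMurphy, hlt, castSuccHom_swap]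

theorem jucysMurphy_last (n : ℕ) :
    jucysMurphy (n + 1) (Fin.last n) = ∑ i : Fin n, of ℂ _ (swap i.castSucc (Fin.last n)) := by
  have hlt : univ.filter (· < Fin.last n) = univ.map (Fin.castSuccEmb (n := n)) := by
    ext j
    induction j using Fin.lastCases with
    | last => simp
    | cast j => simp [Fin.castSucc_lt_last]
  simp [jucysMurphy, hlt]

theorem prod_X_add_jucysMurphy_succ (n : ℕ) :
    ((List.finRange (n + 1)).map fun i =>
        (X : (MonoidAlgebra ℂ (Perm (Fin (n + 1))))[X]) + C (jucysMurphy (n + 1) i)).prod =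
      (((List.finRange n).map fun i =>
          (X : (MonoidAlgebra ℂ (Perm (Fin n)))[X]) + C (jucysMurphy n i)).prod).map
          (mapDomainRingHom ℂ (castSuccHom n)) *
        (X + C (jucysMurphy (n + 1) (Fin.last n))) := by
  simp [List.finRange_succ_last, Polynomial.map_list_prod, Function.comp_def, jucysMurphy_castSucc]

theorem sum_C_mul_X_pow_numCycles_succ (n : ℕ) :
    ∑ σ : Perm (Fin (n + 1)),
        C (of ℂ _ σ) * (X : (MonoidAlgebra ℂ (Perm (Fin (n + 1))))[X]) ^ numCycles σ =
      (∑ σ : Perm (Fin n),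
          C (of ℂ _ σ) * (X : (MonoidAlgebra ℂ (Perm (Fin n)))[X]) ^ numCycles σ).map
          (mapDomainRingHom ℂ (castSuccHom n)) *
        (X + C (jucysMurphy (n + 1) (Fin.last n))) := by
  rw [← castSuccHom_mul_swap_bijective.sum_comp, Fintype.sum_prod_type, Polynomial.map_sum,
    Finset.sum_mul]
  refine sum_congr rfl fun σ _ => ?_
  have hlast : C (of ℂ _ (castSuccHom n σ * swap (Fin.last n) (Fin.last n))) *
      X ^ numCycles (castSuccHom n σ * swap (Fin.last n) (Fin.last n)) =
      C (of ℂ _ (castSuccHom n σ)) * X ^ numCycles σ * X := by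
    rw [swap_self, ← Perm.one_def, mul_one, numCycles_castSuccHom, pow_succ, mul_assoc]
  have hcast (i : Fin n) : C (of ℂ _ (castSuccHom n σ * swap i.castSucc (Fin.last n))) *
      X ^ numCycles (castSuccHom n σ * swap i.castSucc (Fin.last n)) =
      C (of ℂ _ (castSuccHom n σ)) * X ^ numCycles σ *
        C (of ℂ _ (swap i.castSucc (Fin.last n))) := by
    rw [numCycles_castSuccHom_mul_swap, map_mul, C_mul, mul_assoc, mul_assoc, X_pow_mul]
  simp only [Fin.sum_univ_castSucc, hcast, hlast, jucysMurphy_last, Polynomial.map_mul,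
    Polynomial.map_pow, map_X, map_C]
  rw [mapDomainRingHom_of, map_sum, mul_add, mul_sum]
  exact add_comm _ _

/-- `T(x) = ∏_{i=1}^{n} (x + J_i) = Σ_{σ ∈ S_n} x^{l(σ)} σ`, where `J_i` are the
Jucys–Murphy elements and `l(σ)` is the number of cycles of `σ`; an identity in
the polynomial ring over `ℂ S_n` (the product is taken in order, but the
factors commute). -/
theorem prod_X_add_jucysMurphy (n : ℕ) :
    ((List.finRange n).map fun i =>
        (X : Polynomial (MonoidAlgebra ℂ (Equiv.Perm (Fin n)))) +
          C (jucysMurphy n i)).prod =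
      ∑ σ : Equiv.Perm (Fin n),
        C (MonoidAlgebra.of ℂ (Equiv.Perm (Fin n)) σ) *
          (X : Polynomial (MonoidAlgebra ℂ (Equiv.Perm (Fin n)))) ^ numCycles σ := by
  induction n with
  | zero => simp [numCycles, ← MonoidAlgebra.one_def]
  | succ n ih => rw [prod_X_add_jucysMurphy_succ, ih, sum_C_mul_X_pow_numCycles_succ]
end

section
/- Let m, n be positive integers, λ a partition of n, and θ a partition of mn that is not m-splittable (i.e. has nonempty m-core). Then the irreducible character of S_{mn} indexed by θ vanishes on the conjugacy class of cycle type mλ: χ^θ_{mλ} = 0. -/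
/-- The `i`-th part (0-based) of the partition described by the multiset `s`,
in weakly decreasing order, padded with zeros. -/
def sortedPart (s : Multiset ℕ) (i : ℕ) : ℕ :=
  ((s.sort (· ≤ ·)).reverse).getD i 0

/-- The set `S_λ = {λ_i - i : i ≥ 1}` of the partition described by the
multiset `s`. -/
def partSetM (s : Multiset ℕ) : Set ℤ :=
  Set.range fun i : ℕ => (sortedPart s i : ℤ) - ((i : ℤ) + 1)

/-- The charge condition on a set `S ⊂ ℤ`. -/
def ChargeCond (S : Set ℤ) : Prop :=
  (S ∩ {k : ℤ | 0 ≤ k}).Finite ∧ ({k : ℤ | k < 0} \ S).Finite ∧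
    (S ∩ {k : ℤ | 0 ≤ k}).ncard = ({k : ℤ | k < 0} \ S).ncard

/-- A partition (multiset of positive parts) is `m`-splittable if every residue
class of its associated set `S_θ` modulo `m` satisfies the charge condition
(equivalently, it has empty `m`-core). -/
def MSplittable (m : ℕ) (s : Multiset ℕ) : Prop :=
  ∀ r : ℕ, r < m → ChargeCond {a : ℤ | (m : ℤ) * a + (r : ℤ) ∈ partSetM s}

/-- The irreducible character `χ^λ_μ` of a symmetric group, via the Frobenius
formula: the coefficient of `x^{λ+δ}` (with `δ = (N-1, N-2, …, 0)`) in the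
product of the Vandermonde determinant `∏_{i<j}(x_i - x_j)` with the power sums
`p_μ = ∏_k p_{μ_k}`, in `N` variables. Here `λ, μ` are partitions of the same
integer with at most `N` parts. -/
noncomputable def chiChar (N : ℕ) (lam mu : Multiset ℕ) : ℤ :=
  MvPolynomial.coeff
    (Finsupp.equivFunOnFinite.symm fun i : Fin N => sortedPart lam i + (N - 1 - (i : ℕ)))
    ((∏ i : Fin N, ∏ j ∈ Finset.Ioi i, (MvPolynomial.X i - MvPolynomial.X j)) *
      (mu.map fun k => ∑ i : Fin N, (MvPolynomial.X i : MvPolynomial (Fin N) ℤ) ^ k).prod)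

/-!
If `χ^θ_{mλ} ≠ 0`, the monomial `x^{θ+δ}` is the product of a monomial `x^σ` of the Vandermonde
determinant, `σ` a permutation of `{0, …, N-1}` with `N = mn`, and a monomial of
`p_{mλ} = expand m p_λ`, all of whose exponents are divisible by `m`. Hence
`θ_i - i - 1 ≡ θ_i + N - 1 - i ≡ σ(i) (mod m)`, so the `N` numbers `θ_i - i - 1` (`i < N`) fall
into each residue class mod `m` exactly `n` times. These numbers are precisely the elements of
`S_θ` that are `≥ -N`, and `S_θ` contains every `k < -N`; so for each `r` the set
`{a | ma + r ∈ S_θ}` contains every `a < -n` and has exactly `n` elements `≥ -n`, which is the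
charge condition.
-/

open Finset

def shiftedPart (s : Multiset ℕ) (i : ℕ) : ℤ := sortedPart s i - (i + 1)

lemma partSetM_eq_range (s : Multiset ℕ) : partSetM s = Set.range (shiftedPart s) := rfl

lemma sortedPart_eq_zero {s : Multiset ℕ} {i : ℕ} (h : Multiset.card s ≤ i) :
    sortedPart s i = 0 :=
  List.getD_eq_default _ _ (by simpa using h)

lemma sortedPart_antitone (s : Multiset ℕ) : Antitone (sortedPart s) := by
  refine antitone_nat_of_succ_le fun i => ?_
  set l := (s.sort (· ≤ ·)).reverse with hl_def
  have hl : l.Pairwise (· ≥ ·) := List.pairwise_reverse.mpr (Multiset.pairwise_sort s _)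
  by_cases h : i + 1 < l.length
  · rw [sortedPart, sortedPart, ← hl_def, List.getD_eq_getElem _ _ h,
      List.getD_eq_getElem _ _ (by omega)]
    exact hl.rel_get_of_lt (a := ⟨i, by omega⟩) (b := ⟨i + 1, h⟩) (by simp)
  · rw [sortedPart, ← hl_def, List.getD_eq_default _ _ (by omega)]
    exact Nat.zero_le _

lemma shiftedPart_strictAnti (s : Multiset ℕ) : StrictAnti (shiftedPart s) :=
  strictAnti_nat_of_succ_lt fun i => by
    have := sortedPart_antitone s (Nat.le_add_right i 1)
    simp only [shiftedPart]; push_cast; omega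

lemma shiftedPart_of_card_le {s : Multiset ℕ} {i : ℕ} (h : Multiset.card s ≤ i) :
    shiftedPart s i = -(i + 1) := by
  simp [shiftedPart, sortedPart_eq_zero h]

lemma shiftedPart_modEq {m n : ℕ} (s : Multiset ℕ) (i : Fin (m * n)) :
    shiftedPart s i ≡ (sortedPart s i + (m * n - 1 - i) : ℕ) [ZMOD m] := by
  refine Int.modEq_iff_dvd.mpr ⟨n, ?_⟩
  have := i.isLt
  simp only [shiftedPart]
  push_cast
  omega

lemma mem_partSetM_of_lt {s : Multiset ℕ} {N : ℕ} (hs : Multiset.card s ≤ N) {k : ℤ}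
    (hk : k < -N) : k ∈ partSetM s := by
  rw [partSetM_eq_range]
  refine ⟨(-k - 1).toNat, ?_⟩
  rw [shiftedPart_of_card_le (by omega)]
  omega

lemma partSetM_inter_Ici {s : Multiset ℕ} {N : ℕ} (hs : Multiset.card s ≤ N) :
    partSetM s ∩ Set.Ici (-N : ℤ) = Set.range fun i : Fin N => shiftedPart s i := by
  rw [partSetM_eq_range]
  ext k
  constructor
  · rintro ⟨⟨i, rfl⟩, hi⟩
    refine ⟨⟨i, ?_⟩, rfl⟩
    by_contra! h
    rw [Set.mem_Ici, shiftedPart_of_card_le (hs.trans h)] at hi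
    omega
  · rintro ⟨i, rfl⟩
    refine ⟨⟨i, rfl⟩, ?_⟩
    simp only [Set.mem_Ici, shiftedPart]
    omega

lemma chargeCond_of_encard_inter_Ici {T : Set ℤ} {n : ℕ} (hlow : ∀ a < -(n : ℤ), a ∈ T)
    (hT : (T ∩ Set.Ici (-n : ℤ)).encard = n) : ChargeCond T := by
  have hfin : (T ∩ Set.Ici (-n : ℤ)).Finite := Set.finite_of_encard_eq_coe hT
  have hcard : (T ∩ Set.Ici (-n : ℤ)).ncard = n := by
    rw [← Set.Finite.cast_ncard_eq hfin] at hT; exact_mod_cast hT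
  have hIco : (Set.Ico (-n : ℤ) 0).ncard = n := by
    rw [← Finset.coe_Ico, Set.ncard_coe_finset, Int.card_Ico]; omega
  have hpos : (T ∩ Set.Ici (-n : ℤ)) \ Set.Iio 0 = T ∩ {k | 0 ≤ k} := by
    ext k
    simp only [Set.mem_sdiff, Set.mem_inter_iff, Set.mem_Ici, Set.mem_Iio, Set.mem_ofPred_eq,
      not_lt]
    exact ⟨fun ⟨⟨hk, _⟩, h⟩ => ⟨hk, h⟩, fun ⟨hk, h⟩ => ⟨⟨hk, by omega⟩, h⟩⟩
  have hneg : T ∩ Set.Ici (-n : ℤ) ∩ Set.Iio 0 = Set.Ico (-n : ℤ) 0 ∩ T := by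
    ext k; simp only [Set.mem_inter_iff, Set.mem_Ici, Set.mem_Iio, Set.mem_Ico]; tauto
  have hgap : Set.Ico (-n : ℤ) 0 \ T = {k | k < 0} \ T := by
    ext k
    simp only [Set.mem_sdiff, Set.mem_Ico, Set.mem_ofPred_eq]
    exact ⟨fun ⟨⟨_, hk⟩, hkT⟩ => ⟨hk, hkT⟩,
      fun ⟨hk, hkT⟩ => ⟨⟨not_lt.mp fun h => hkT (hlow k h), hk⟩, hkT⟩⟩
  have h₁ := Set.ncard_inter_add_ncard_sdiff_eq_ncard _ (Set.Iio (0 : ℤ)) hfin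
  have h₂ := Set.ncard_inter_add_ncard_sdiff_eq_ncard _ T (Set.finite_Ico (-n : ℤ) 0)
  rw [hpos, hneg, hcard] at h₁
  rw [hgap, hIco] at h₂
  exact ⟨hpos ▸ hfin.sdiff, hgap ▸ (Set.finite_Ico _ _).sdiff, by omega⟩

lemma chargeCond_residueClass {S : Set ℤ} {m n r : ℕ} (hr : r < m)
    (hlow : ∀ k < -((m * n : ℕ) : ℤ), k ∈ S)
    (hS : {k ∈ S | -((m * n : ℕ) : ℤ) ≤ k ∧ k ≡ r [ZMOD m]}.encard = n) :
    ChargeCond {a : ℤ | (m : ℤ) * a + r ∈ S} := by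
  have hm : (0 : ℤ) < m := by omega
  have hφ : Function.Injective fun a : ℤ => (m : ℤ) * a + r :=
    fun a b h => mul_left_cancel₀ hm.ne' (add_right_cancel h)
  refine chargeCond_of_encard_inter_Ici (n := n) (fun a ha => hlow _ ?_) ?_
  · push_cast; nlinarith
  rw [← hS, ← hφ.encard_image]
  congr 1
  ext k
  simp only [Set.mem_image, Set.mem_inter_iff, Set.mem_ofPred_eq, Set.mem_Ici]
  push_cast
  constructor
  · rintro ⟨a, ⟨haS, ha⟩, rfl⟩
    refine ⟨haS, by nlinarith, ?_⟩
    simp [Int.ModEq]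
  · rintro ⟨hkS, hk, hkr⟩
    have hkm : k % m = r := by rw [hkr, Int.emod_eq_of_lt (by omega) (by omega)]
    have hk' : (m : ℤ) * (k / m) + r = k := by rw [← hkm, Int.mul_ediv_add_emod]
    refine ⟨k / m, ⟨by rwa [hk'], ?_⟩, hk'⟩
    have : (m : ℤ) * (-n - 1) < m * (k / m) := by linarith
    have := lt_of_mul_lt_mul_left this hm.le
    omega

lemma mSplittable_of_card_filter_modEq {m n : ℕ} {s : Multiset ℕ}
    (hs : Multiset.card s ≤ m * n)
    (H : ∀ r < m, #{i : Fin (m * n) | shiftedPart s i ≡ r [ZMOD m]} = n) : MSplittable m s := by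
  intro r hr
  refine chargeCond_residueClass hr (fun k hk => mem_partSetM_of_lt hs hk) ?_
  set f := fun i : Fin (m * n) => shiftedPart s i
  have hf : Function.Injective f := (shiftedPart_strictAnti s).injective.comp Fin.val_injective
  have hrange := partSetM_inter_Ici hs
  have hclass : {k ∈ partSetM s | -((m * n : ℕ) : ℤ) ≤ k ∧ k ≡ r [ZMOD m]} =
      f '' ↑({i | f i ≡ r [ZMOD m]} : Finset (Fin (m * n))) := by
    ext k
    simp only [Set.mem_image, Finset.coe_filter, Finset.mem_univ, true_and, Set.mem_ofPred_eq]
    constructor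
    · rintro ⟨hkP, hk, hkr⟩
      obtain ⟨i, rfl⟩ : k ∈ Set.range f := hrange ▸ ⟨hkP, hk⟩
      exact ⟨i, hkr, rfl⟩
    · rintro ⟨i, hi, rfl⟩
      obtain ⟨hP, hI⟩ : f i ∈ partSetM s ∩ Set.Ici _ := by rw [hrange]; exact ⟨i, rfl⟩
      exact ⟨hP, hI, hi⟩
  rw [hclass, hf.encard_image, Set.encard_coe_eq_coe_finsetCard, H r hr]

namespace MvPolynomial

open Matrix Equiv

lemma prod_univ_X_pow_eq_monomial {R ι : Type*} [CommSemiring R] [Fintype ι] (k : ι → ℕ) :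
    ∏ i, (X i : MvPolynomial ι R) ^ k i = monomial (Finsupp.equivFunOnFinite.symm k) 1 := by
  rw [monomial_eq, C_1, one_mul, Finsupp.prod_fintype _ _ fun _ => pow_zero _]
  rfl

section Vandermonde

variable {R : Type*} [CommRing R] {N : ℕ}

lemma support_det_vandermonde_X_subset :
    (det (vandermonde (X : Fin N → MvPolynomial (Fin N) R))).support ⊆
      univ.image fun σ : Perm (Fin N) => Finsupp.equivFunOnFinite.symm fun i => (σ i : ℕ) := by
  classical
  rw [← det_transpose, det_apply]
  refine support_sum.trans (Finset.biUnion_subset.mpr fun σ _ => support_smul.trans ?_)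
  simp only [transpose_apply, vandermonde_apply, prod_univ_X_pow_eq_monomial]
  exact (support_monomial_subset).trans
    (Finset.singleton_subset_iff.mpr (Finset.mem_image_of_mem _ (Finset.mem_univ σ)))

lemma prod_Ioi_sub_eq_neg_one_pow_mul_det (v : Fin N → R) :
    ∏ i, ∏ j ∈ Ioi i, (v i - v j) = (-1) ^ (∑ i : Fin N, #(Ioi i)) * det (vandermonde v) := by
  rw [det_vandermonde, ← prod_pow_eq_pow_sum, ← prod_mul_distrib]
  refine prod_congr rfl fun i _ => ?_
  rw [← prod_neg]
  simp_rw [neg_sub]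

lemma support_prod_Ioi_X_sub_subset :
    (∏ i, ∏ j ∈ Ioi i, (X i - X j) : MvPolynomial (Fin N) R).support ⊆
      univ.image fun σ : Perm (Fin N) => Finsupp.equivFunOnFinite.symm fun i => (σ i : ℕ) := by
  rw [prod_Ioi_sub_eq_neg_one_pow_mul_det, ← map_one C, ← map_neg C, ← map_pow, C_mul']
  exact support_smul.trans support_det_vandermonde_X_subset

end Vandermonde

lemma prod_map_sum_X_pow_mul_eq_expand {R ι : Type*} [CommSemiring R] [Fintype ι] (m : ℕ)
    (μ : Multiset ℕ) :
    (μ.map fun k => ∑ i : ι, (X i : MvPolynomial ι R) ^ (m * k)).prod =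
      expand m (μ.map fun k => ∑ i : ι, (X i : MvPolynomial ι R) ^ k).prod := by
  simp [map_multiset_prod, Multiset.map_map, pow_mul]

end MvPolynomial

open MvPolynomial in
lemma exists_perm_modEq_of_chiChar_ne_zero {N m : ℕ} {θ lam : Multiset ℕ}
    (h : chiChar N θ (lam.map (m * ·)) ≠ 0) :
    ∃ σ : Equiv.Perm (Fin N), ∀ i : Fin N, sortedPart θ i + (N - 1 - i) ≡ σ i [MOD m] := by
  classical
  rw [chiChar, Multiset.map_map, Function.comp_def, prod_map_sum_X_pow_mul_eq_expand,
    ← mem_support_iff] at h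
  obtain ⟨d, hd, e, he, hde⟩ := Finset.mem_add.mp (support_mul _ _ h)
  obtain ⟨σ, -, rfl⟩ := Finset.mem_image.mp (support_prod_Ioi_X_sub_subset hd)
  refine ⟨σ, fun i => ?_⟩
  have hdvd : m ∣ e i := by
    by_contra hm
    exact mem_support_iff.mp he (coeff_expand_of_not_dvd _ hm)
  have hi : (σ i : ℕ) + e i = sortedPart θ i + (N - 1 - i) := DFunLike.congr_fun hde i
  rw [← hi]
  simpa using (Nat.modEq_zero_iff_dvd.mpr hdvd).add_left (σ i : ℕ)

lemma card_filter_fin_mul_modEq {m n r : ℕ} (hr : r < m) :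
    #{j : Fin (m * n) | (j : ℕ) ≡ r [MOD m]} = n := by
  have h := Nat.count_modEq_card (m * n) (by omega : 0 < m) r
  rw [Nat.count_eq_card_filter_range, Nat.mul_mod_right,
    Nat.mul_div_cancel_left _ (by omega)] at h
  rw [card_filter, Fin.sum_univ_eq_sum_range (fun j => if j ≡ r [MOD m] then 1 else 0),
    ← card_filter, h]
  simp

theorem char_eq_zero_of_not_msplittable_general (m n : ℕ) (lam θ : Multiset ℕ)
    (hθ : θ.sum = m * n) (hθ0 : 0 ∉ θ) (hns : ¬ MSplittable m θ) :
    chiChar (m * n) θ (lam.map (fun k => m * k)) = 0 := by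
  by_contra hχ
  obtain ⟨σ, hσ⟩ := exists_perm_modEq_of_chiChar_ne_zero hχ
  have hcard : Multiset.card θ ≤ m * n := by
    simpa [hθ] using Multiset.card_nsmul_le_sum (s := θ) (a := 1)
      fun x hx => Nat.one_le_iff_ne_zero.mpr (ne_of_mem_of_not_mem hx hθ0)
  refine hns (mSplittable_of_card_filter_modEq hcard fun r hr => ?_)
  have hres (i : Fin (m * n)) : shiftedPart θ i ≡ r [ZMOD m] ↔ (σ i : ℕ) ≡ r [MOD m] := by
    have hi := (shiftedPart_modEq θ i).trans (Int.natCast_modEq_iff.mpr (hσ i))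
    rw [← Int.natCast_modEq_iff]
    exact ⟨hi.symm.trans, hi.trans⟩
  calc #{i : Fin (m * n) | shiftedPart θ i ≡ r [ZMOD m]}
      = #{i : Fin (m * n) | (σ i : ℕ) ≡ r [MOD m]} := by simp_rw [hres]
    _ = #{j : Fin (m * n) | (j : ℕ) ≡ r [MOD m]} := Finset.card_equiv σ (by simp)
    _ = n := card_filter_fin_mul_modEq hr

/-- If `θ ⊢ mn` is not `m`-splittable (it has nonempty `m`-core), then the
irreducible character of `S_{mn}` indexed by `θ` vanishes on the conjugacy
class of cycle type `mλ`, for any `λ ⊢ n`. -/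
theorem char_eq_zero_of_not_msplittable (m n : ℕ) (hm : 0 < m) (hn : 0 < n)
    (lam θ : Multiset ℕ) (hlam : lam.sum = n) (hlam0 : 0 ∉ lam)
    (hθ : θ.sum = m * n) (hθ0 : 0 ∉ θ) (hns : ¬ MSplittable m θ) :
    chiChar (m * n) θ (lam.map (fun k => m * k)) = 0 :=
  char_eq_zero_of_not_msplittable_general m n lam θ hθ hθ0 hns
end

section
/- For m ≥ 2 and natural numbers k_1,...,k_{m-1}, define e^{(m),j}_{k_1,...,k_{m-1}} = ∏_{1 ≤ i ≤ m, i ≠ j} (i-j)^{k_{(i-j) mod m}}. Then for j ≤ m/2: |e^{(m),j+1}_{k_1,...,k_{m-1}}| ≤ |e^{(m),j}_{k_1,...,k_{m-1}}|, and if moreover k_{m-j} ≥ 1 then |e^{(m),j+1}_{k_1,...,k_{m-1}}| ≤ (j/(m-j)) |e^{(m),j}_{k_1,...,k_{m-1}}|. -/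
/-!
Write `e^{(m),j} = ∏_{d} f(d)` over the differences `d = i - j ∈ [1-j, m-j] \ {0}`, where
`f(d) = d ^ k_{d mod m}`. Passing from `j` to `j + 1` shifts this window down by one: the factor
`f(m-j) = (m-j)^{k_{m-j}}` leaves it and `f(-j) = (-j)^{k_{m-j}}` enters, so
`|e^{(m),j+1}| = (j/(m-j))^{k_{m-j}} |e^{(m),j}|`, and `j ≤ m - j` makes the ratio at most `1`.
-/

/-- The coefficient `e^{(m),j}_{k_1,…,k_{m-1}} = ∏_{1 ≤ i ≤ m, i ≠ j}
(i-j)^{k_{(i-j) mod m}}`, where `k : ℕ → ℕ` records `k_1, …, k_{m-1}`. -/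
def ecoef (m j : ℕ) (k : ℕ → ℕ) : ℤ :=
  ∏ i ∈ (Finset.Icc 1 m).erase j,
    ((i : ℤ) - (j : ℤ)) ^ k ((((i : ℤ) - (j : ℤ)) % (m : ℤ)).toNat)

open Finset

theorem prod_Icc_erase_mul_eq_mul_prod_Icc_erase_shift {M : Type*} [CommMonoid M] (g : ℤ → M)
    {a b c : ℤ} (hab : a ≤ b + 1) (hca : c ≠ a) (hcb : c ≠ b + 1) :
    (∏ x ∈ (Icc a b).erase c, g x) * g (b + 1) =
      g a * ∏ x ∈ (Icc (a + 1) (b + 1)).erase c, g x := by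
  have htop : (Icc a (b + 1)).erase c = insert (b + 1) ((Icc a b).erase c) := by
    rw [← insert_Icc_right_eq_Icc_add_one hab, erase_insert_of_ne (Ne.symm hcb)]
  have hbot : (Icc a (b + 1)).erase c = insert a ((Icc (a + 1) (b + 1)).erase c) := by
    rw [← insert_Icc_add_one_left_eq_Icc hab, erase_insert_of_ne (Ne.symm hca)]
  calc (∏ x ∈ (Icc a b).erase c, g x) * g (b + 1)
      = ∏ x ∈ (Icc a (b + 1)).erase c, g x := by rw [htop, prod_insert (by simp), mul_comm]
    _ = g a * ∏ x ∈ (Icc (a + 1) (b + 1)).erase c, g x := by rw [hbot, prod_insert (by simp)]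

def ecoefFactor (m : ℕ) (k : ℕ → ℕ) (d : ℤ) : ℤ :=
  d ^ k ((d % m).toNat)

lemma ecoef_eq_prod_Icc (m j : ℕ) (k : ℕ → ℕ) :
    ecoef m j k = ∏ d ∈ (Icc (1 - j : ℤ) (m - j)).erase 0, ecoefFactor m k d := by
  refine prod_nbij' (fun i => (i : ℤ) - j) (fun d => (d + j).toNat) ?_ ?_ ?_ ?_ ?_ <;>
    intro a ha <;> simp only [mem_erase, mem_Icc] at ha ⊢
  all_goals first | rfl | omega

lemma ecoefFactor_sub_self {m j : ℕ} (k : ℕ → ℕ) (hj0 : 0 < j) (hjm : j ≤ m) :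
    ecoefFactor m k (m - j) = ((m : ℤ) - j) ^ k (m - j) := by
  rw [ecoefFactor, Int.emod_eq_of_lt (by omega) (by omega)]
  congr 2
  omega

lemma ecoefFactor_neg {m j : ℕ} (k : ℕ → ℕ) (hj0 : 0 < j) (hjm : j ≤ m) :
    ecoefFactor m k (-j) = (-(j : ℤ)) ^ k (m - j) := by
  have hmod : (-(j : ℤ)) % m = (m - j) % m := by
    rw [show (m : ℤ) - j = -j + m * 1 by ring, Int.add_mul_emod_self_left]
  rw [ecoefFactor, hmod, Int.emod_eq_of_lt (by omega) (by omega)]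
  congr 2
  omega

theorem ecoef_succ_mul {m j : ℕ} (k : ℕ → ℕ) (hj0 : 1 ≤ j) (hjm : j < m) :
    ecoef m (j + 1) k * ((m : ℤ) - j) ^ k (m - j) = (-(j : ℤ)) ^ k (m - j) * ecoef m j k := by
  have h := prod_Icc_erase_mul_eq_mul_prod_Icc_erase_shift (ecoefFactor m k)
    (a := -j) (b := m - j - 1) (c := 0) (by omega) (by omega) (by omega)
  rw [sub_add_cancel, neg_add_eq_sub, ecoefFactor_sub_self k hj0 hjm.le,
    ecoefFactor_neg k hj0 hjm.le] at h
  rw [ecoef_eq_prod_Icc, ecoef_eq_prod_Icc, ← h]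
  push_cast
  ring_nf

theorem abs_ecoef_succ {m j : ℕ} (k : ℕ → ℕ) (hj0 : 1 ≤ j) (hjm : j < m) :
    |(ecoef m (j + 1) k : ℚ)| =
      ((j : ℚ) / ((m : ℚ) - j)) ^ k (m - j) * |(ecoef m j k : ℚ)| := by
  have hpos : (0 : ℚ) < (m : ℚ) - j := by rw [sub_pos]; exact_mod_cast hjm
  have h := congrArg (fun x : ℤ => |(x : ℚ)|) (ecoef_succ_mul k hj0 hjm)
  simp only [Int.cast_mul, Int.cast_pow, Int.cast_sub, Int.cast_natCast, Int.cast_neg,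
    abs_mul, abs_pow, abs_neg, Nat.abs_cast, abs_of_pos hpos] at h
  rw [div_pow, div_mul_eq_mul_div, eq_div_iff (pow_pos hpos _).ne', h]

theorem ecoef_abs_le_general (m j : ℕ) (hj1 : 1 ≤ j) (hj : 2 * j ≤ m)
    (k : ℕ → ℕ) :
    |ecoef m (j + 1) k| ≤ |ecoef m j k| ∧
      (1 ≤ k (m - j) →
        (|ecoef m (j + 1) k| : ℚ) ≤
          ((j : ℚ) / ((m : ℚ) - (j : ℚ))) * (|ecoef m j k| : ℚ)) := by
  have hjm : j < m := by omega
  have hratio := abs_ecoef_succ k hj1 hjm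
  have hr0 : 0 ≤ (j : ℚ) / ((m : ℚ) - j) :=
    div_nonneg (Nat.cast_nonneg j) (by rw [sub_nonneg]; exact_mod_cast hjm.le)
  have hr1 : (j : ℚ) / ((m : ℚ) - j) ≤ 1 := by
    rw [div_le_one (by rw [sub_pos]; exact_mod_cast hjm)]
    have : (2 * j : ℚ) ≤ m := by exact_mod_cast hj
    linarith
  refine ⟨?_, fun hk => ?_⟩
  · have : |(ecoef m (j + 1) k : ℚ)| ≤ |(ecoef m j k : ℚ)| := by
      rw [hratio]
      exact mul_le_of_le_one_left (abs_nonneg _) (pow_le_one₀ hr0 hr1)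
    exact_mod_cast this
  · rw [hratio]
    exact mul_le_mul_of_nonneg_right (pow_le_of_le_one hr0 hr1 (by omega)) (abs_nonneg _)

/-- Telescoping bounds: for `1 ≤ j ≤ m/2`,
`|e^{(m),j+1}| ≤ |e^{(m),j}|`, and if moreover `k_{m-j} ≥ 1` then
`|e^{(m),j+1}| ≤ (j/(m-j)) |e^{(m),j}|`. -/
theorem ecoef_abs_le (m j : ℕ) (hm : 2 ≤ m) (hj1 : 1 ≤ j) (hj : 2 * j ≤ m)
    (k : ℕ → ℕ) :
    |ecoef m (j + 1) k| ≤ |ecoef m j k| ∧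
      (1 ≤ k (m - j) →
        (|ecoef m (j + 1) k| : ℚ) ≤
          ((j : ℚ) / ((m : ℚ) - (j : ℚ))) * (|ecoef m j k| : ℚ)) :=
  ecoef_abs_le_general m j hj1 hj k
end
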